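/- Let φ: 𝕋 → ℝ be analytic and positive, let j ≥ 0 be an integer, and define ψ = −φ'/(j+2). Consider the map f(s,v) = (s + φ(s)v + O(v²), v + ψ(s)v² + O(v³)) near v = 0. Then the analytic change of variables x = k ∫₀^s φ(t)^{−(j+1)/(j+2)} dt, y = k φ(s)^{1/(j+2)} v, with k⁻¹ = ∫₀¹ φ(t)^{−(j+1)/(j+2)} dt, maps 𝕋 to 𝕋 in the x-variable (x is defined modulo 1), and transforms f into the form x₁ = x + y + O(y²), y₁ = y + O(y³). -/

import Mathlib

/-!
Write `g = φ^{-(j+1)/(j+2)}` (`xDensity`), `h = φ^{1/(j+2)}` (`yWeight`) and `ψ = -φ'/(j+2)`,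
so that `x' = k g` and `y = k h(s) v` with `k = coordScale`. Two pointwise identities drive
everything: `g φ = h`, and `h' φ + h ψ = 0`, which is where the choice of `ψ` enters.

If `t = s + φ(s) v + O(v²)`, the first gives `x(t) - x(s) = k ∫_s^t g = k g(s) (t - s) + O(v²)
= y + O(v²)`. If moreover `w = v + ψ(s) v² + O(v³)`, a second-order Taylor expansion of `h` at `s`
gives `h(t) w - h(s) v = (h'(s) φ(s) + h(s) ψ(s)) v² + O(v³) = O(v³)`. The constants are uniform
in `s` because all functions involved are continuous and `1`-periodic, and `v = O(y)` because `h`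
is bounded below by a positive constant.
-/

/-- The new angular coordinate `x = k ∫₀^s φ(t)^{−(j+1)/(j+2)} dt`,
with `k⁻¹ = ∫₀¹ φ(t)^{−(j+1)/(j+2)} dt`. -/
noncomputable def xCoord (φ : ℝ → ℝ) (j : ℕ) (s : ℝ) : ℝ :=
  (∫ t in (0:ℝ)..1, φ t ^ (-(((j:ℝ) + 1) / ((j:ℝ) + 2))))⁻¹ *
    ∫ t in (0:ℝ)..s, φ t ^ (-(((j:ℝ) + 1) / ((j:ℝ) + 2)))

/-- The new radial coordinate `y = k φ(s)^{1/(j+2)} v`. -/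
noncomputable def yCoord (φ : ℝ → ℝ) (j : ℕ) (p : ℝ × ℝ) : ℝ :=
  (∫ t in (0:ℝ)..1, φ t ^ (-(((j:ℝ) + 1) / ((j:ℝ) + 2))))⁻¹ *
    (φ p.1 ^ ((1:ℝ) / ((j:ℝ) + 2)) * p.2)

open Set intervalIntegral
open scoped Interval

namespace Function.Periodic

variable {F : ℝ → ℝ} {c : ℝ}

theorem exists_abs_le (hp : Periodic F c) (hc : c ≠ 0) (hF : Continuous F) :
    ∃ M, ∀ x, |F x| ≤ M := by
  obtain ⟨M, hM⟩ := isBounded_iff_forall_norm_le.1 (hp.isBounded_of_continuous hc hF)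
  exact ⟨M, fun x => hM _ (mem_range_self x)⟩

theorem exists_pos_le (hp : Periodic F c) (hc : c ≠ 0) (hF : Continuous F)
    (hpos : ∀ x, 0 < F x) : ∃ m, 0 < m ∧ ∀ x, m ≤ F x := by
  obtain ⟨_, ⟨x₀, rfl⟩, hmin⟩ :=
    (hp.compact_of_continuous hc hF).exists_isLeast (range_nonempty F)
  exact ⟨F x₀, hpos x₀, fun x => hmin (mem_range_self x)⟩

protected theorem deriv (hp : Periodic F c) : Periodic (deriv F) c := fun x => by
  rw [← deriv_comp_add_const, hp.funext]

end Function.Periodic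

theorem abs_sub_le_of_abs_deriv_le {F : ℝ → ℝ} {M : ℝ} (hF : Differentiable ℝ F)
    (hM : ∀ x, |deriv F x| ≤ M) (x y : ℝ) : |F y - F x| ≤ M * |y - x| :=
  Convex.norm_image_sub_le_of_norm_deriv_le (fun z _ => hF z) (fun z _ => hM z) convex_univ
    (mem_univ x) (mem_univ y)

theorem abs_integral_sub_mul_le {g : ℝ → ℝ} {M : ℝ} (hg : Differentiable ℝ g)
    (hM : ∀ x, |deriv g x| ≤ M) (s t : ℝ) :
    |(∫ u in s..t, g u) - g s * (t - s)| ≤ M * (t - s) ^ 2 := by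
  have hint : (∫ u in s..t, g u) - g s * (t - s) = ∫ u in s..t, (g u - g s) := by
    rw [integral_sub (hg.continuous.intervalIntegrable s t) intervalIntegrable_const,
      integral_const, smul_eq_mul, mul_comm]
  have hM0 : 0 ≤ M := (abs_nonneg _).trans (hM 0)
  have hbound : ∀ u ∈ Ι s t, ‖g u - g s‖ ≤ M * |t - s| := fun u hu =>
    (abs_sub_le_of_abs_deriv_le hg hM s u).trans <|
      mul_le_mul_of_nonneg_left (abs_sub_left_of_mem_uIcc (uIoc_subset_uIcc hu)) hM0
  calc |(∫ u in s..t, g u) - g s * (t - s)| ≤ M * |t - s| * |t - s| := by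
        rw [hint]; exact norm_integral_le_of_norm_le_const hbound
    _ = M * (t - s) ^ 2 := by rw [mul_assoc, ← sq, sq_abs]

theorem abs_sub_sub_deriv_mul_le {F : ℝ → ℝ} {M : ℝ} (hF : ContDiff ℝ 2 F)
    (hM : ∀ x, |deriv (deriv F) x| ≤ M) (s t : ℝ) :
    |F t - F s - deriv F s * (t - s)| ≤ M * (t - s) ^ 2 := by
  have hF' : ContDiff ℝ 1 (deriv F) := hF.deriv'
  rw [← integral_deriv_eq_sub (fun x _ => (hF.differentiable two_ne_zero) x)
    (hF'.continuous.intervalIntegrable s t)]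
  exact abs_integral_sub_mul_le (hF'.differentiable one_ne_zero) hM s t

theorem le_div_pow_mul_abs_pow {X D c v y : ℝ} (n : ℕ) (hc : 0 < c) (hD : 0 ≤ D)
    (hcv : c * |v| ≤ |y|) (hX : X ≤ D * |v| ^ n) : X ≤ D / c ^ n * |y| ^ n := by
  calc X ≤ D * |v| ^ n := hX
    _ = D / c ^ n * (c * |v|) ^ n := by field_simp; ring
    _ ≤ D / c ^ n * |y| ^ n := by gcongr

theorem abs_sub_le_of_abs_sub_add_mul_le {s t v a M C₀ : ℝ}
    (h : |t - (s + a * v)| ≤ C₀ * v ^ 2) (ha : |a| ≤ M) (hv : |v| ≤ 1) :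
    |t - s| ≤ (M + |C₀|) * |v| := by
  have hv2 : C₀ * v ^ 2 ≤ |C₀| * |v| :=
    calc C₀ * v ^ 2 ≤ |C₀| * |v| ^ 2 := by rw [sq_abs]; gcongr; exact le_abs_self C₀
      _ ≤ |C₀| * |v| := by gcongr; nlinarith [abs_nonneg v]
  calc |t - s| = |a * v + (t - (s + a * v))| := by ring_nf
    _ ≤ |a| * |v| + |t - (s + a * v)| := by rw [← abs_mul]; exact abs_add_le _ _
    _ ≤ (M + |C₀|) * |v| := by nlinarith [abs_nonneg v]

noncomputable def xDensity (φ : ℝ → ℝ) (j : ℕ) (t : ℝ) : ℝ :=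
  φ t ^ (-(((j:ℝ) + 1) / ((j:ℝ) + 2)))

noncomputable def yWeight (φ : ℝ → ℝ) (j : ℕ) (t : ℝ) : ℝ :=
  φ t ^ ((1:ℝ) / ((j:ℝ) + 2))

noncomputable def coordScale (φ : ℝ → ℝ) (j : ℕ) : ℝ :=
  (∫ t in (0:ℝ)..1, xDensity φ j t)⁻¹

section Coordinates

variable {φ : ℝ → ℝ} {j : ℕ}

theorem xCoord_eq (s : ℝ) :
    xCoord φ j s = coordScale φ j * ∫ t in (0:ℝ)..s, xDensity φ j t :=
  rfl

theorem yCoord_eq (p : ℝ × ℝ) : yCoord φ j p = coordScale φ j * (yWeight φ j p.1 * p.2) :=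
  rfl

theorem xDensity_mul_self {s : ℝ} (hs : 0 < φ s) : xDensity φ j s * φ s = yWeight φ j s := by
  rw [xDensity, yWeight, ← Real.rpow_add_one hs.ne']
  congr 1
  field_simp
  ring

theorem yWeight_pos {s : ℝ} (hs : 0 < φ s) : 0 < yWeight φ j s :=
  Real.rpow_pos_of_pos hs _

theorem deriv_yWeight_mul_add {s : ℝ} (hd : DifferentiableAt ℝ φ s) (hs : 0 < φ s) :
    deriv (yWeight φ j) s * φ s + yWeight φ j s * (-(deriv φ s) / ((j:ℝ) + 2)) = 0 := by
  have hderiv : deriv (yWeight φ j) s =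
      deriv φ s * (1 / ((j:ℝ) + 2)) * φ s ^ (1 / ((j:ℝ) + 2) - 1) :=
    (hd.hasDerivAt.rpow_const (Or.inl hs.ne')).deriv
  rw [hderiv, yWeight, Real.rpow_sub_one hs.ne']
  field_simp
  ring

theorem contDiff_xDensity {n : WithTop ℕ∞} (hφ : ContDiff ℝ n φ) (hpos : ∀ x, 0 < φ x) :
    ContDiff ℝ n (xDensity φ j) :=
  hφ.rpow_const_of_ne fun x => (hpos x).ne'

theorem contDiff_yWeight {n : WithTop ℕ∞} (hφ : ContDiff ℝ n φ) (hpos : ∀ x, 0 < φ x) :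
    ContDiff ℝ n (yWeight φ j) :=
  hφ.rpow_const_of_ne fun x => (hpos x).ne'

theorem continuous_xDensity (hφ : Continuous φ) (hpos : ∀ x, 0 < φ x) :
    Continuous (xDensity φ j) :=
  hφ.rpow_const fun x => Or.inl (hpos x).ne'

theorem continuous_yWeight (hφ : Continuous φ) (hpos : ∀ x, 0 < φ x) :
    Continuous (yWeight φ j) :=
  hφ.rpow_const fun x => Or.inl (hpos x).ne'

theorem periodic_xDensity {c : ℝ} (hper : Function.Periodic φ c) :
    Function.Periodic (xDensity φ j) c := fun x => by
  simp only [xDensity, hper x]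

theorem periodic_yWeight {c : ℝ} (hper : Function.Periodic φ c) :
    Function.Periodic (yWeight φ j) c := fun x => by
  simp only [yWeight, hper x]

theorem coordScale_pos (hφ : Continuous φ) (hpos : ∀ x, 0 < φ x) : 0 < coordScale φ j :=
  inv_pos.2 <| intervalIntegral_pos_of_pos ((continuous_xDensity hφ hpos).intervalIntegrable 0 1)
    (fun x => Real.rpow_pos_of_pos (hpos x) _) one_pos

theorem xCoord_sub_xCoord (hφ : Continuous φ) (hpos : ∀ x, 0 < φ x) (s t : ℝ) :
    xCoord φ j t - xCoord φ j s = coordScale φ j * ∫ u in s..t, xDensity φ j u := by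
  have hint : ∀ a b, IntervalIntegrable (xDensity φ j) MeasureTheory.volume a b :=
    (continuous_xDensity hφ hpos).intervalIntegrable
  rw [xCoord_eq, xCoord_eq, ← mul_sub, integral_interval_sub_left (hint 0 t) (hint 0 s)]

theorem xCoord_add_one (hφ : Continuous φ) (hpos : ∀ x, 0 < φ x)
    (hper : Function.Periodic φ 1) (s : ℝ) : xCoord φ j (s + 1) = xCoord φ j s + 1 := by
  rw [← sub_eq_iff_eq_add', xCoord_sub_xCoord hφ hpos,
    (periodic_xDensity hper).intervalIntegral_add_eq s 0, zero_add, coordScale]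
  exact inv_mul_cancel₀ (inv_pos.1 (coordScale_pos hφ hpos)).ne'

end Coordinates

section Estimates

variable {φ : ℝ → ℝ} {j : ℕ}

theorem exists_abs_xCoord_sub_le (hφ : ContDiff ℝ 1 φ) (hpos : ∀ x, 0 < φ x)
    (hper : Function.Periodic φ 1) :
    ∃ A, 0 ≤ A ∧ ∀ s t v : ℝ, |xCoord φ j t - (xCoord φ j s + yCoord φ j (s, v))| ≤
      A * ((t - s) ^ 2 + |t - (s + φ s * v)|) := by
  have hg := contDiff_xDensity (j := j) hφ hpos
  obtain ⟨M₁, hM₁⟩ := (periodic_xDensity hper).deriv.exists_abs_le one_ne_zero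
    (hg.continuous_deriv le_rfl)
  obtain ⟨M₀, hM₀⟩ := (periodic_xDensity hper).exists_abs_le one_ne_zero hg.continuous
  have hM₁0 : 0 ≤ M₁ := (abs_nonneg _).trans (hM₁ 0)
  have hM₀0 : 0 ≤ M₀ := (abs_nonneg _).trans (hM₀ 0)
  have hk := coordScale_pos (j := j) hφ.continuous hpos
  refine ⟨coordScale φ j * (M₁ + M₀), by positivity, fun s t v => ?_⟩
  set e := t - (s + φ s * v)
  have key : xCoord φ j t - (xCoord φ j s + yCoord φ j (s, v)) = coordScale φ j *
      (((∫ u in s..t, xDensity φ j u) - xDensity φ j s * (t - s)) + xDensity φ j s * e) := by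
    rw [sub_add_eq_sub_sub, xCoord_sub_xCoord hφ.continuous hpos, yCoord_eq,
      ← xDensity_mul_self (hpos s)]
    ring
  have hI := abs_integral_sub_mul_le (hg.differentiable one_ne_zero) hM₁ s t
  have he : |xDensity φ j s * e| ≤ M₀ * |e| := by
    rw [abs_mul]; exact mul_le_mul_of_nonneg_right (hM₀ s) (abs_nonneg e)
  rw [key, abs_mul, abs_of_pos hk, mul_assoc (coordScale φ j)]
  gcongr
  nlinarith [abs_add_le ((∫ u in s..t, xDensity φ j u) - xDensity φ j s * (t - s))
    (xDensity φ j s * e), abs_nonneg e, sq_nonneg (t - s)]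

theorem exists_abs_yCoord_sub_le (hφ : ContDiff ℝ 2 φ) (hpos : ∀ x, 0 < φ x)
    (hper : Function.Periodic φ 1) :
    ∃ B, 0 ≤ B ∧ ∀ s t v w : ℝ, |yCoord φ j (t, w) - yCoord φ j (s, v)| ≤
      B * ((t - s) ^ 2 * |v| + |t - (s + φ s * v)| * |v| + |t - s| * v ^ 2 +
        |w - (v + (-(deriv φ s) / ((j:ℝ) + 2)) * v ^ 2)|) := by
  have hh := contDiff_yWeight (j := j) hφ hpos
  have hh' : ContDiff ℝ 1 (deriv (yWeight φ j)) := hh.deriv'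
  have hψ : Continuous fun s => -(deriv φ s) / ((j:ℝ) + 2) :=
    ((hφ.continuous_deriv one_le_two).neg).div_const _
  obtain ⟨M₂, hM₂⟩ := (periodic_yWeight hper).deriv.deriv.exists_abs_le one_ne_zero
    (hh'.continuous_deriv le_rfl)
  obtain ⟨M₁, hM₁⟩ := (periodic_yWeight hper).deriv.exists_abs_le one_ne_zero hh'.continuous
  obtain ⟨M₀, hM₀⟩ := (periodic_yWeight hper).exists_abs_le one_ne_zero hh.continuous
  obtain ⟨Mψ, hMψ⟩ := Function.Periodic.exists_abs_le
    (fun s => by simp only [hper.deriv s]) one_ne_zero hψ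
  have hM₂0 : 0 ≤ M₂ := (abs_nonneg _).trans (hM₂ 0)
  have hM₁0 : 0 ≤ M₁ := (abs_nonneg _).trans (hM₁ 0)
  have hM₀0 : 0 ≤ M₀ := (abs_nonneg _).trans (hM₀ 0)
  have hMψ0 : 0 ≤ Mψ := (abs_nonneg _).trans (hMψ 0)
  have hk := coordScale_pos (j := j) hφ.continuous hpos
  refine ⟨coordScale φ j * (M₂ + M₁ + M₁ * Mψ + M₀), by positivity, fun s t v w => ?_⟩
  set h := yWeight φ j
  set ψ := -(deriv φ s) / ((j:ℝ) + 2)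
  set e₁ := t - (s + φ s * v)
  set e₂ := w - (v + ψ * v ^ 2)
  set R := h t - h s - deriv h s * (t - s)
  have key : yCoord φ j (t, w) - yCoord φ j (s, v) = coordScale φ j *
      (R * v + deriv h s * e₁ * v + (h t - h s) * ψ * v ^ 2 + h t * e₂) := by
    rw [yCoord_eq, yCoord_eq]
    linear_combination (coordScale φ j * v ^ 2) *
      deriv_yWeight_mul_add (j := j) ((hφ.differentiable two_ne_zero) s) (hpos s)
  set M := M₂ + M₁ + M₁ * Mψ + M₀
  have hM₁ψ : 0 ≤ M₁ * Mψ := mul_nonneg hM₁0 hMψ0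
  have hR : |R * v| ≤ M * ((t - s) ^ 2 * |v|) := by
    rw [abs_mul, ← mul_assoc]
    gcongr
    exact (abs_sub_sub_deriv_mul_le hh hM₂ s t).trans (by gcongr; linarith)
  have he₁ : |deriv h s * e₁ * v| ≤ M * (|e₁| * |v|) := by
    rw [abs_mul, abs_mul, mul_assoc]
    gcongr
    exact (hM₁ s).trans (by linarith)
  have hΔ : |(h t - h s) * ψ * v ^ 2| ≤ M * (|t - s| * v ^ 2) := by
    have hMVT := abs_sub_le_of_abs_deriv_le (hh.differentiable two_ne_zero) hM₁ s t
    calc |(h t - h s) * ψ * v ^ 2| = |h t - h s| * |ψ| * v ^ 2 := by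
          rw [abs_mul, abs_mul, abs_pow, sq_abs]
      _ ≤ M₁ * |t - s| * Mψ * v ^ 2 := by gcongr; exact hMψ s
      _ = M₁ * Mψ * (|t - s| * v ^ 2) := by ring
      _ ≤ M * (|t - s| * v ^ 2) := by gcongr; linarith
  have he₂ : |h t * e₂| ≤ M * |e₂| := by
    rw [abs_mul]
    gcongr
    exact (hM₀ t).trans (by linarith)
  rw [key, abs_mul, abs_of_pos hk, mul_assoc (coordScale φ j)]
  gcongr
  linarith [abs_add_le (R * v + deriv h s * e₁ * v + (h t - h s) * ψ * v ^ 2) (h t * e₂),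
    abs_add_le (R * v + deriv h s * e₁ * v) ((h t - h s) * ψ * v ^ 2),
    abs_add_le (R * v) (deriv h s * e₁ * v)]

theorem exists_mul_abs_le_abs_yCoord (hφ : Continuous φ) (hpos : ∀ x, 0 < φ x)
    (hper : Function.Periodic φ 1) :
    ∃ c, 0 < c ∧ ∀ s v, c * |v| ≤ |yCoord φ j (s, v)| := by
  obtain ⟨m, hm, hmle⟩ := (periodic_yWeight (j := j) hper).exists_pos_le one_ne_zero
    (continuous_yWeight hφ hpos) fun x => yWeight_pos (hpos x)
  have hk := coordScale_pos (j := j) hφ hpos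
  refine ⟨coordScale φ j * m, by positivity, fun s v => ?_⟩
  rw [yCoord_eq, abs_mul, abs_mul, abs_of_pos hk, abs_of_pos (yWeight_pos (hpos s)), mul_assoc]
  gcongr
  exact hmle s

theorem exists_abs_xCoord_sub_le_mul_sq (hφ : ContDiff ℝ 1 φ) (hpos : ∀ x, 0 < φ x)
    (hper : Function.Periodic φ 1) (C₀ : ℝ) :
    ∃ C, ∀ s t v : ℝ, |v| ≤ 1 → |t - (s + φ s * v)| ≤ C₀ * v ^ 2 →
      |xCoord φ j t - (xCoord φ j s + yCoord φ j (s, v))| ≤ C * yCoord φ j (s, v) ^ 2 := by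
  obtain ⟨A, hA0, hA⟩ := exists_abs_xCoord_sub_le (j := j) hφ hpos hper
  obtain ⟨c, hc, hcy⟩ := exists_mul_abs_le_abs_yCoord (j := j) hφ.continuous hpos hper
  obtain ⟨Mφ, hMφ⟩ := hper.exists_abs_le one_ne_zero hφ.continuous
  set P := Mφ + |C₀|
  have hP : 0 ≤ P := add_nonneg ((abs_nonneg _).trans (hMφ 0)) (abs_nonneg C₀)
  refine ⟨A * (P ^ 2 + |C₀|) / c ^ 2, fun s t v hv he => ?_⟩
  have hts := abs_sub_le_of_abs_sub_add_mul_le he (hMφ s) hv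
  rw [← sq_abs (yCoord φ j (s, v))]
  refine le_div_pow_mul_abs_pow 2 hc (by positivity) (hcy s v) ((hA s t v).trans ?_)
  have hts2 : (t - s) ^ 2 ≤ P ^ 2 * |v| ^ 2 := by rw [← sq_abs, ← mul_pow]; gcongr
  have he' : |t - (s + φ s * v)| ≤ |C₀| * |v| ^ 2 :=
    he.trans (by rw [sq_abs]; gcongr; exact le_abs_self C₀)
  calc A * ((t - s) ^ 2 + |t - (s + φ s * v)|) ≤ A * (P ^ 2 * |v| ^ 2 + |C₀| * |v| ^ 2) := by
        gcongr
    _ = A * (P ^ 2 + |C₀|) * |v| ^ 2 := by ring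

theorem exists_abs_yCoord_sub_le_mul_cube (hφ : ContDiff ℝ 2 φ) (hpos : ∀ x, 0 < φ x)
    (hper : Function.Periodic φ 1) (C₀ : ℝ) :
    ∃ C, ∀ s t v w : ℝ, |v| ≤ 1 → |t - (s + φ s * v)| ≤ C₀ * v ^ 2 →
      |w - (v + (-(deriv φ s) / ((j:ℝ) + 2)) * v ^ 2)| ≤ C₀ * |v| ^ 3 →
      |yCoord φ j (t, w) - yCoord φ j (s, v)| ≤ C * |yCoord φ j (s, v)| ^ 3 := by
  obtain ⟨B, hB0, hB⟩ := exists_abs_yCoord_sub_le (j := j) hφ hpos hper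
  obtain ⟨c, hc, hcy⟩ := exists_mul_abs_le_abs_yCoord (j := j) hφ.continuous hpos hper
  obtain ⟨Mφ, hMφ⟩ := hper.exists_abs_le one_ne_zero hφ.continuous
  set P := Mφ + |C₀|
  have hP : 0 ≤ P := add_nonneg ((abs_nonneg _).trans (hMφ 0)) (abs_nonneg C₀)
  refine ⟨B * (P ^ 2 + P + 2 * |C₀|) / c ^ 3, fun s t v w hv he₁ he₂ => ?_⟩
  have hts := abs_sub_le_of_abs_sub_add_mul_le he₁ (hMφ s) hv
  refine le_div_pow_mul_abs_pow 3 hc (by positivity) (hcy s v) ((hB s t v w).trans ?_)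
  have hts2 : (t - s) ^ 2 ≤ P ^ 2 * |v| ^ 2 := by rw [← sq_abs, ← mul_pow]; gcongr
  have he₁' : |t - (s + φ s * v)| ≤ |C₀| * |v| ^ 2 :=
    he₁.trans (by rw [sq_abs]; gcongr; exact le_abs_self C₀)
  have he₂' : |w - (v + (-(deriv φ s) / ((j:ℝ) + 2)) * v ^ 2)| ≤ |C₀| * |v| ^ 3 :=
    he₂.trans (by gcongr; exact le_abs_self C₀)
  calc B * ((t - s) ^ 2 * |v| + |t - (s + φ s * v)| * |v| + |t - s| * v ^ 2 +
        |w - (v + (-(deriv φ s) / ((j:ℝ) + 2)) * v ^ 2)|)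
      ≤ B * (P ^ 2 * |v| ^ 2 * |v| + |C₀| * |v| ^ 2 * |v| + P * |v| * v ^ 2 +
        |C₀| * |v| ^ 3) := by
        gcongr
    _ = B * (P ^ 2 + P + 2 * |C₀|) * |v| ^ 3 := by rw [← sq_abs v]; ring

end Estimates

/-- Let `φ : 𝕋 → ℝ` be analytic and positive, `j ≥ 0`, `ψ = −φ'/(j+2)`, and let
`f(s,v) = (s + φ(s)v + O(v²), v + ψ(s)v² + O(v³))` near `v = 0`. Then the change of variables
`x = k ∫₀^s φ^{−(j+1)/(j+2)}`, `y = k φ(s)^{1/(j+2)} v` (with `k` normalizing so that `x` is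
defined modulo `1`) satisfies `x(s+1) = x(s) + 1`, and transforms `f` into
`x₁ = x + y + O(y²)`, `y₁ = y + O(y³)`. -/
theorem stmt10 (φ : ℝ → ℝ) (hφa : ∀ x, AnalyticAt ℝ φ x) (hφpos : ∀ x, 0 < φ x)
    (hφper : ∀ x, φ (x + 1) = φ x) (j : ℕ)
    (f : ℝ × ℝ → ℝ × ℝ) (C₀ δ₀ : ℝ) (hδ₀ : 0 < δ₀)
    (hf1 : ∀ s v : ℝ, |v| ≤ δ₀ →
      |(f (s, v)).1 - (s + φ s * v)| ≤ C₀ * v ^ 2)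
    (hf2 : ∀ s v : ℝ, |v| ≤ δ₀ →
      |(f (s, v)).2 - (v + (-(deriv φ s) / ((j:ℝ) + 2)) * v ^ 2)| ≤ C₀ * |v| ^ 3) :
    (∀ s : ℝ, xCoord φ j (s + 1) = xCoord φ j s + 1) ∧
    ∃ C δ : ℝ, 0 < δ ∧ ∀ s v : ℝ, |v| ≤ δ →
      |xCoord φ j (f (s, v)).1 - (xCoord φ j s + yCoord φ j (s, v))|
        ≤ C * (yCoord φ j (s, v)) ^ 2 ∧
      |yCoord φ j (f (s, v)) - yCoord φ j (s, v)| ≤ C * |yCoord φ j (s, v)| ^ 3 := by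
  have hφ : ContDiff ℝ 2 φ := AnalyticOnNhd.contDiff fun x _ => hφa x
  obtain ⟨C₁, hC₁⟩ :=
    exists_abs_xCoord_sub_le_mul_sq (j := j) (hφ.of_le one_le_two) hφpos hφper C₀
  obtain ⟨C₂, hC₂⟩ := exists_abs_yCoord_sub_le_mul_cube hφ hφpos hφper C₀
  refine ⟨xCoord_add_one hφ.continuous hφpos hφper, max C₁ C₂, min δ₀ 1, lt_min hδ₀ one_pos,
    fun s v hv => ?_⟩
  have hvδ₀ : |v| ≤ δ₀ := hv.trans (min_le_left _ _)
  have hv₁ : |v| ≤ 1 := hv.trans (min_le_right _ _)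
  exact ⟨(hC₁ s _ v hv₁ (hf1 s v hvδ₀)).trans <|
      mul_le_mul_of_nonneg_right (le_max_left _ _) (sq_nonneg _),
    (hC₂ s _ v _ hv₁ (hf1 s v hvδ₀) (hf2 s v hvδ₀)).trans <|
      mul_le_mul_of_nonneg_right (le_max_right _ _) (by positivity)⟩
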